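/- arXiv:2310.12621 — 2 statements merged into one kernel-verified Lean document; each statement's English description precedes it below -/
import Mathlib

section
/- Let R be a commutative ring and E a subset of Spec(R). Then the total ring of fractions of the product ring ∏_{𝔭∈E} R/𝔭 is canonically isomorphic to ∏_{𝔭∈E} κ(𝔭), where κ(𝔭) = R_𝔭/𝔭R_𝔭 is the residue field at 𝔭. -/
/-!
The non-zero-divisors of a product of rings are exactly the families of non-zero-divisors, so
the total ring of fractions of `∏ R/𝔭` is the product of the fraction fields of the `R/𝔭`, and
`κ(𝔭)` is the fraction field of `R/𝔭`.
-/

/-- Residue field of `R` at a prime `𝔭`, i.e. `κ(𝔭) = R_𝔭 / 𝔭 R_𝔭`. -/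
noncomputable abbrev residueFieldAt {R : Type*} [CommRing R] (p : PrimeSpectrum R) :=
  IsLocalRing.ResidueField (Localization.AtPrime p.asIdeal)

open scoped nonZeroDivisors

section

variable {ι : Type*}

theorem Pi.mem_nonZeroDivisors_iff {M₀ : ι → Type*} [∀ i, MonoidWithZero (M₀ i)]
    {a : Π i, M₀ i} : a ∈ (Π i, M₀ i)⁰ ↔ ∀ i, a i ∈ (M₀ i)⁰ := by
  classical
  simp only [_root_.mem_nonZeroDivisors_iff, funext_iff, Pi.mul_apply, Pi.zero_apply]
  refine ⟨fun ⟨hl, hr⟩ i => ⟨fun x hx => ?_, fun x hx => ?_⟩,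
    fun h => ⟨fun x hx j => (h j).1 _ (hx j), fun x hx j => (h j).2 _ (hx j)⟩⟩
  · simpa using hl (Pi.single i x) (fun j => by
      rw [← Pi.mul_apply, ← Pi.single_mul_right, hx, Pi.single_zero, Pi.zero_apply]) i
  · simpa using hr (Pi.single i x) (fun j => by
      rw [← Pi.mul_apply, ← Pi.single_mul_left, hx, Pi.single_zero, Pi.zero_apply]) i

theorem Pi.nonZeroDivisors_eq_pi {M₀ : ι → Type*} [∀ i, MonoidWithZero (M₀ i)] :
    (Π i, M₀ i)⁰ = Submonoid.pi Set.univ fun i => (M₀ i)⁰ :=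
  Submonoid.ext fun _ => by simp [Pi.mem_nonZeroDivisors_iff, Submonoid.mem_pi]

instance IsFractionRing.pi (R K : ι → Type*) [∀ i, CommSemiring (R i)] [∀ i, CommSemiring (K i)]
    [∀ i, Algebra (R i) (K i)] [∀ i, IsFractionRing (R i) (K i)] :
    IsFractionRing (Π i, R i) (Π i, K i) := by
  rw [IsFractionRing, Pi.nonZeroDivisors_eq_pi]
  infer_instance

end

/-- For a commutative ring `R` and a subset `E ⊆ Spec R`, the total ring of fractions of
`∏_{𝔭∈E} R/𝔭` is canonically isomorphic to `∏_{𝔭∈E} κ(𝔭)`: there is a ring isomorphism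
compatible with the canonical maps from `R`. -/
theorem stmt_2 {R : Type*} [CommRing R] (E : Set (PrimeSpectrum R)) :
    ∃ e : FractionRing (∀ p : E, R ⧸ (p : PrimeSpectrum R).asIdeal) ≃+*
        (∀ p : E, residueFieldAt (p : PrimeSpectrum R)),
      ∀ x : R,
        e (algebraMap (∀ p : E, R ⧸ (p : PrimeSpectrum R).asIdeal)
            (FractionRing (∀ p : E, R ⧸ (p : PrimeSpectrum R).asIdeal))
            (fun p => Ideal.Quotient.mk (p : PrimeSpectrum R).asIdeal x)) =
          fun p : E => algebraMap R (residueFieldAt (p : PrimeSpectrum R)) x := by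
  let e := IsLocalization.algEquiv (∀ p : E, R ⧸ (p : PrimeSpectrum R).asIdeal)⁰
    (FractionRing (∀ p : E, R ⧸ (p : PrimeSpectrum R).asIdeal))
    (∀ p : E, (p : PrimeSpectrum R).asIdeal.ResidueField)
  -- `algebraMap (R ⧸ 𝔭) κ(𝔭)` is defined as the lift of `algebraMap R κ(𝔭)`.
  exact ⟨e.toRingEquiv, fun x => e.commutes _⟩
end

section
/- Let R be a Dedekind domain with torsion ideal class group and E an infinite set of maximal ideals of R. Let π : R → S := ∏_{𝔭∈E} R_𝔭 be the canonical map into the product of localizations. Then Im π* = E ∪ {0}, which equals the closure of E in the flat topology on Spec(R), and for every prime ideal P of S containing the direct sum ideal ⊕_{𝔭∈E} R_𝔭 one has π⁻¹(P) = 0. -/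
/-!
In a Noetherian domain of dimension one a nonzero `r` lies in only finitely many primes, so
`π r` is invertible modulo the direct sum ideal `J`; hence every proper ideal containing `J`
contracts to `0`. A prime `Q` of `S` not containing `J` misses some idempotent `e_𝔭`, and then
`π⁻¹ Q ⊆ 𝔭`, so `π⁻¹ Q` is `0` or `𝔭`.

In the flat topology every open set containing `y` contains all primes above `y`, so `0` lies in
the closure of any nonempty set. A nonzero prime `x ∉ E` has the flat neighbourhood
`V(a) ∩ V(b)` missing `E`: take `0 ≠ a ∈ x`, so that only finitely many points of `E` lie in
`V(a)`, and `b ∈ x` outside all of them by prime avoidance.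
-/

/-- The flat (inverse) topology on `Spec R`: the sets `V(a)`, `a ∈ R`, form a subbasis
of opens. -/
def flatTopology (R : Type*) [CommRing R] : TopologicalSpace (PrimeSpectrum R) :=
  TopologicalSpace.generateFrom {U | ∃ a : R, U = PrimeSpectrum.zeroLocus {a}}

open Topology

namespace Pi

variable {ι : Type*} (A : ι → Type*) [∀ i, CommRing (A i)]

def finiteSupportIdeal : Ideal (∀ i, A i) where
  carrier := {f | {i | f i ≠ 0}.Finite}
  add_mem' {f g} hf hg := (hf.union hg).subset fun i hi => by
    by_contra! h
    simp_all
  zero_mem' := by simp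
  smul_mem' c f hf := hf.subset fun i => right_ne_zero_of_mul

variable {A}

@[simp]
theorem mem_finiteSupportIdeal {f : ∀ i, A i} :
    f ∈ finiteSupportIdeal A ↔ {i | f i ≠ 0}.Finite :=
  Iff.rfl

theorem finiteSupportIdeal_ne_top (A : ι → Type*) [∀ i, CommRing (A i)] [Infinite ι]
    [∀ i, Nontrivial (A i)] : finiteSupportIdeal A ≠ ⊤ := by
  rw [Ne, Ideal.eq_top_iff_one, mem_finiteSupportIdeal]
  simpa using Set.infinite_univ

theorem exists_single_one_notMem_of_not_le [DecidableEq ι] {Q : Ideal (∀ i, A i)} [Q.IsPrime]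
    (h : ¬finiteSupportIdeal A ≤ Q) : ∃ i, Pi.single i 1 ∉ Q := by
  obtain ⟨f, hf, hfQ⟩ := SetLike.not_le_iff_exists.mp h
  have hvanish : f * ∏ i ∈ hf.toFinset, (1 - Pi.single i 1) = 0 := by
    funext j
    by_cases hj : f j = 0
    · simp [hj]
    · refine mul_eq_zero_of_right _ ?_
      rw [Finset.prod_apply]
      exact Finset.prod_eq_zero (i := j) (hf.mem_toFinset.mpr hj) (by simp)
  obtain ⟨i, -, hi⟩ := Ideal.IsPrime.prod_mem_iff.mp <|
    (Ideal.IsPrime.mem_or_mem ‹_› (hvanish ▸ Q.zero_mem)).resolve_left hfQ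
  exact ⟨i, fun h1 => Ideal.IsPrime.ne_top ‹_› <| (Q.eq_top_iff_one).mpr <| by
    simpa using Q.add_mem hi h1⟩

end Pi

namespace PrimeSpectrum

variable {R : Type*} [CommRing R]

theorem finite_setOf_mem_asIdeal [IsNoetherianRing R] [Ring.DimensionLEOne R] {r : R}
    (hr : r ≠ 0) : {x : PrimeSpectrum R | r ∈ x.asIdeal}.Finite := by
  refine ((Ideal.span {r}).finite_minimalPrimes_of_isNoetherianRing R).preimage
    (fun _ _ _ _ h => PrimeSpectrum.ext h) |>.subset fun x hx => ?_
  have hrx : Ideal.span {r} ≤ x.asIdeal := (Ideal.span_singleton_le_iff_mem _).mpr hx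
  refine ⟨⟨x.isPrime, hrx⟩, fun q ⟨hq, hrq⟩ hqx => ?_⟩
  have hq0 : q ≠ ⊥ := fun h => hr (by simpa [h] using hrq)
  exact ((hq.isMaximal hq0).eq_of_le x.isPrime.ne_top hqx).ge

section Localization

variable {ι : Type*} (p : ι → PrimeSpectrum R)

def toPiLocalizationAt : R →+* ∀ i, Localization.AtPrime (p i).asIdeal :=
  RingHom.pi fun i => algebraMap R (Localization.AtPrime (p i).asIdeal)

variable {p}

theorem isUnit_toPiLocalizationAt_apply {r : R} {i : ι} (hr : r ∉ (p i).asIdeal) :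
    IsUnit (toPiLocalizationAt p r i) :=
  IsLocalization.map_units _ (⟨r, hr⟩ : (p i).asIdeal.primeCompl)

theorem comap_toPiLocalizationAt_le [DecidableEq ι]
    {Q : Ideal (∀ i, Localization.AtPrime (p i).asIdeal)} {i : ι} (hi : Pi.single i 1 ∉ Q) :
    Q.comap (toPiLocalizationAt p) ≤ (p i).asIdeal := by
  intro r hr
  by_contra hrp
  refine hi ?_
  rw [← Ring.mul_inverse_cancel _ (isUnit_toPiLocalizationAt_apply hrp), Pi.single_mul_right]
  exact Q.mul_mem_right _ hr

theorem mem_range_comap_toPiLocalizationAt (i : ι) :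
    p i ∈ Set.range (comap (toPiLocalizationAt p)) :=
  ⟨⟨(IsLocalRing.maximalIdeal _).comap (Pi.evalRingHom _ i), inferInstance⟩,
    PrimeSpectrum.ext <| by
      rw [comap_asIdeal, Ideal.comap_comap]
      exact Localization.AtPrime.under_maximalIdeal⟩

theorem infinite_setOf_mem_of_mem_comap {P : Ideal (∀ i, Localization.AtPrime (p i).asIdeal)}
    (hP : P ≠ ⊤) (hJ : Pi.finiteSupportIdeal _ ≤ P) {r : R}
    (hr : r ∈ P.comap (toPiLocalizationAt p)) : {i | r ∈ (p i).asIdeal}.Infinite := by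
  intro hfin
  let g : ∀ i, Localization.AtPrime (p i).asIdeal := fun i =>
    Ring.inverse (toPiLocalizationAt p r i)
  have hcofinite : 1 - toPiLocalizationAt p r * g ∈ Pi.finiteSupportIdeal _ := by
    refine hfin.subset fun i hi => ?_
    by_contra hri
    exact hi <| sub_eq_zero.mpr
      (Ring.mul_inverse_cancel _ (isUnit_toPiLocalizationAt_apply hri)).symm
  exact hP <| (P.eq_top_iff_one).mpr <| by
    simpa using P.add_mem (hJ hcofinite) (P.mul_mem_right g hr)

theorem comap_toPiLocalizationAt_eq_bot [IsNoetherianRing R] [Ring.DimensionLEOne R]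
    (hp : p.Injective) {P : Ideal (∀ i, Localization.AtPrime (p i).asIdeal)}
    (hP : P ≠ ⊤) (hJ : Pi.finiteSupportIdeal _ ≤ P) :
    P.comap (toPiLocalizationAt p) = ⊥ := by
  refine (Submodule.eq_bot_iff _).mpr fun r hr => ?_
  by_contra hr0
  exact infinite_setOf_mem_of_mem_comap hP hJ hr <|
    (finite_setOf_mem_asIdeal hr0).preimage hp.injOn

theorem range_comap_toPiLocalizationAt [IsDomain R] [IsNoetherianRing R] [Ring.DimensionLEOne R]
    [Infinite ι] (hp : p.Injective) :
    Set.range (comap (toPiLocalizationAt p)) = insert ⊥ (Set.range p) := by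
  classical
  refine subset_antisymm ?_ (Set.insert_subset ?_ ?_)
  · rintro _ ⟨Q, rfl⟩
    by_cases hJ : Pi.finiteSupportIdeal _ ≤ Q.asIdeal
    · exact Or.inl <| PrimeSpectrum.ext <| comap_toPiLocalizationAt_eq_bot hp Q.isPrime.ne_top hJ
    obtain ⟨i, hi⟩ := Pi.exists_single_one_notMem_of_not_le hJ
    have hle := comap_toPiLocalizationAt_le hi
    by_cases hbot : Q.asIdeal.comap (toPiLocalizationAt p) = ⊥
    · exact Or.inl (PrimeSpectrum.ext hbot)
    · refine Or.inr ⟨i, PrimeSpectrum.ext ?_⟩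
      exact (((Q.isPrime.comap _).isMaximal hbot).eq_of_le (p i).isPrime.ne_top hle).symm
  · obtain ⟨M, hM, hJM⟩ := Ideal.exists_le_maximal _
      (Pi.finiteSupportIdeal_ne_top fun i => Localization.AtPrime (p i).asIdeal)
    exact ⟨⟨M, hM.isPrime⟩,
      PrimeSpectrum.ext <| comap_toPiLocalizationAt_eq_bot hp hM.ne_top hJM⟩
  · rintro _ ⟨i, rfl⟩
    exact mem_range_comap_toPiLocalizationAt i

end Localization

section FlatTopology

theorem isOpen_zeroLocus_singleton_flatTopology (a : R) :
    IsOpen[flatTopology R] (zeroLocus {a}) :=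
  TopologicalSpace.isOpen_generateFrom_of_mem ⟨a, rfl⟩

theorem mem_closure_singleton_flatTopology {x y : PrimeSpectrum R} (h : y ≤ x) :
    y ∈ closure[flatTopology R] {x} := by
  let := flatTopology R
  rw [← specializes_iff_mem_closure, specializes_iff_nhds, flatTopology,
    TopologicalSpace.nhds_generateFrom (a := y)]
  refine le_iInf₂ fun _ ⟨hy, a, ha⟩ => Filter.le_principal_iff.mpr ?_
  subst ha
  exact (isOpen_zeroLocus_singleton_flatTopology a).mem_nhds <| by
    simpa using h (by simpa using hy)

theorem exists_mem_notMem_of_isMaximal {x : PrimeSpectrum R} (hx : x.asIdeal.IsMaximal)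
    {F : Set (PrimeSpectrum R)} (hF : F.Finite) (hxF : x ∉ F) :
    ∃ b ∈ x.asIdeal, ∀ y ∈ F, b ∉ y.asIdeal := by
  have : ¬(x.asIdeal : Set R) ⊆ ⋃ y ∈ F, y.asIdeal := by
    rw [Ideal.subset_union_prime_finite hF x x fun y _ _ _ => y.isPrime]
    rintro ⟨y, hyF, hxy⟩
    exact hxF (PrimeSpectrum.ext (hx.eq_of_le y.isPrime.ne_top hxy) ▸ hyF)
  simpa [Set.not_subset] using this

theorem closure_flatTopology_subset [IsDomain R] [IsNoetherianRing R] [Ring.DimensionLEOne R]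
    (E : Set (PrimeSpectrum R)) : closure[flatTopology R] E ⊆ insert ⊥ E := by
  let := flatTopology R
  intro x hx
  by_contra hxE
  obtain ⟨hxbot, hxE⟩ := not_or.mp hxE
  have hx0 : x.asIdeal ≠ ⊥ := fun h => hxbot (PrimeSpectrum.ext h)
  obtain ⟨a, hax, ha0⟩ := Submodule.exists_mem_ne_zero_of_ne_bot hx0
  obtain ⟨b, hbx, hb⟩ := exists_mem_notMem_of_isMaximal (x.isPrime.isMaximal hx0)
    ((finite_setOf_mem_asIdeal ha0).inter_of_right E) fun h => hxE h.1
  obtain ⟨y, ⟨hya, hyb⟩, hyE⟩ := mem_closure_iff.mp hx _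
    ((isOpen_zeroLocus_singleton_flatTopology a).inter (isOpen_zeroLocus_singleton_flatTopology b))
    (by simpa using ⟨hax, hbx⟩)
  simp only [mem_zeroLocus, Set.singleton_subset_iff, SetLike.mem_coe] at hya hyb
  exact hb y ⟨hyE, hya⟩ hyb

theorem closure_flatTopology_eq [IsDomain R] [IsNoetherianRing R] [Ring.DimensionLEOne R]
    {E : Set (PrimeSpectrum R)} (hE : E.Nonempty) : closure[flatTopology R] E = insert ⊥ E := by
  refine (closure_flatTopology_subset E).antisymm
    (Set.insert_subset ?_ (@subset_closure _ (flatTopology R) E))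
  obtain ⟨x, hx⟩ := hE
  exact @closure_mono _ (flatTopology R) _ _ (Set.singleton_subset_iff.mpr hx) _
    (mem_closure_singleton_flatTopology bot_le)

end FlatTopology

end PrimeSpectrum

theorem stmt_13_general {R : Type*} [CommRing R] [IsDedekindDomain R]
    (E : Set (PrimeSpectrum R)) (hInf : E.Infinite) :
    Set.range
        (PrimeSpectrum.comap
          (Pi.ringHom fun p : E =>
            algebraMap R (Localization.AtPrime (p : PrimeSpectrum R).asIdeal))) =
        insert ⟨⊥, Ideal.bot_prime⟩ E ∧
      @closure _ (flatTopology R) E = insert ⟨⊥, Ideal.bot_prime⟩ E ∧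
      ∀ P : Ideal (∀ p : E, Localization.AtPrime (p : PrimeSpectrum R).asIdeal), P.IsPrime →
        (∀ f : ∀ p : E, Localization.AtPrime (p : PrimeSpectrum R).asIdeal,
          {p | f p ≠ 0}.Finite → f ∈ P) →
        P.comap (Pi.ringHom fun p : E =>
            algebraMap R (Localization.AtPrime (p : PrimeSpectrum R).asIdeal)) = ⊥ := by
  have : Infinite E := hInf.to_subtype
  refine ⟨?_, PrimeSpectrum.closure_flatTopology_eq hInf.nonempty, fun P hP hJ =>
    PrimeSpectrum.comap_toPiLocalizationAt_eq_bot Subtype.val_injective hP.ne_top hJ⟩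
  have hrange := PrimeSpectrum.range_comap_toPiLocalizationAt
    (p := ((↑) : E → PrimeSpectrum R)) Subtype.val_injective
  rwa [Subtype.range_coe] at hrange

/-- Let `R` be a Dedekind domain with torsion ideal class group and `E` an infinite set of
maximal ideals of `R`. Let `π : R → S = ∏_{𝔭∈E} R_𝔭` be the canonical map into the
product of localizations. Then `Im π* = E ∪ {0}`, this set equals the closure of `E` in
the flat topology, and every prime of `S` containing the direct sum ideal `⊕_{𝔭∈E} R_𝔭`
contracts to `0`. -/
theorem stmt_13 {R : Type*} [CommRing R] [IsDedekindDomain R]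
    (htor : Monoid.IsTorsion (ClassGroup R))
    (E : Set (PrimeSpectrum R)) (hmax : ∀ p ∈ E, p.asIdeal.IsMaximal) (hInf : E.Infinite) :
    Set.range
        (PrimeSpectrum.comap
          (Pi.ringHom fun p : E =>
            algebraMap R (Localization.AtPrime (p : PrimeSpectrum R).asIdeal))) =
        insert ⟨⊥, Ideal.bot_prime⟩ E ∧
      @closure _ (flatTopology R) E = insert ⟨⊥, Ideal.bot_prime⟩ E ∧
      ∀ P : Ideal (∀ p : E, Localization.AtPrime (p : PrimeSpectrum R).asIdeal), P.IsPrime →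
        (∀ f : ∀ p : E, Localization.AtPrime (p : PrimeSpectrum R).asIdeal,
          {p | f p ≠ 0}.Finite → f ∈ P) →
        P.comap (Pi.ringHom fun p : E =>
            algebraMap R (Localization.AtPrime (p : PrimeSpectrum R).asIdeal)) = ⊥ :=
  stmt_13_general E hInf
end
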